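/- Let k be a commutative ring and H a bialgebra over k with comultiplication Δ (written Δ(b) = Σ b⁽¹⁾ ⊗ b⁽²⁾). Let R = Σ R¹ ⊗ R² ∈ H ⊗ H be invertible and satisfy: Δᵒᵖ(b) = R·Δ(b)·R⁻¹ for all b ∈ H (where Δᵒᵖ = σ ∘ Δ with σ the flip), (Δ ⊗ id)(R) = R₁₃R₂₃, and (id ⊗ Δ)(R) = R₁₃R₁₂ (where R₁₂ = Σ R¹ ⊗ R² ⊗ 1, R₁₃ = Σ R¹ ⊗ 1 ⊗ R², R₂₃ = Σ 1 ⊗ R¹ ⊗ R² in H^{⊗3}). Let A be a k-module with an associative k-bilinear multiplication μ and two commuting H-module structures ρ₁, ρ₂ (i.e. ρ₁(b)ρ₂(b′) = ρ₂(b′)ρ₁(b) on A for all b, b′ ∈ H) such that μ is invariant under the H ⊗ H-action: ρ₁(b)ρ₂(b′)·μ(x,y) = Σ μ(ρ₁(b⁽¹⁾)ρ₂(b′⁽¹⁾)·x, ρ₁(b⁽²⁾)ρ₂(b′⁽²⁾)·y) for all b, b′ ∈ H and x, y ∈ A. Define μ′(x,y) = Σ μ(ρ₂(R¹)·x, ρ₁(R²)·y),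 and let H act on A diagonally by ρ(b) = Σ ρ₁(b⁽¹⁾)ρ₂(b⁽²⁾). Then μ′ is associative and H-invariant for the diagonal action: ρ(b)·μ′(x,y) = Σ μ′(ρ(b⁽¹⁾)·x, ρ(b⁽²⁾)·y) for all b ∈ H, x, y ∈ A. -/

import Mathlib

/-!
Combine `ρ₁, ρ₂` into one action `π = ρ₁ ⊗ ρ₂` of the bialgebra `K = H ⊗ H`; then `μ` is
`K`-equivariant and `μ′ = μ ∘ (π ⊗ π)(F)` for `F = Σ (1 ⊗ R¹) ⊗ (R² ⊗ 1) ∈ K ⊗ K`. The two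
hexagon relations for `R` make `F` a Drinfeld twist of `K` (the leftover factors `R₂₃` and `R₁₂`
commute, as they live in different copies of `H`), and twisting an equivariant associative
multiplication by a twist keeps it associative. Conjugation `Δᵒᵖ = R Δ R⁻¹` turns into
`Δ_K(Δ b) · F = F · (Δ ⊗ Δ)(Δ b)`, which is exactly the invariance of `μ′` under `b ↦ π(Δ b)`.
-/

open scoped TensorProduct

namespace Stmt7

variable (k : Type) [CommRing k]
variable (H : Type) [Ring H] [Bialgebra k H]
variable (A : Type) [AddCommGroup A] [Module k A]

/-- Given two actions `ρ, ρ' : H → End(A)`, the componentwise action of `H ⊗ H` on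
`A ⊗ A` in which the first tensor factor acts through `ρ` on the first factor of
`A ⊗ A` and the second through `ρ'`: `Σ G¹ ⊗ G²` sends `x ⊗ y` to `Σ ρ(G¹)x ⊗ ρ'(G²)y`. -/
noncomputable def act2 (ρ ρ' : H →ₐ[k] Module.End k A) :
    H ⊗[k] H →ₗ[k] (A ⊗[k] A →ₗ[k] A ⊗[k] A) :=
  TensorProduct.homTensorHomMap (RingHom.id k) A A A A ∘ₗ
    TensorProduct.map ρ.toLinearMap ρ'.toLinearMap

/-- `R₁₂ = Σ R¹ ⊗ R² ⊗ 1` in `H⊗³`. -/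
noncomputable def ext12 : H ⊗[k] H →ₗ[k] H ⊗[k] (H ⊗[k] H) :=
  TensorProduct.map LinearMap.id ((TensorProduct.mk k H H).flip 1)

/-- `R₁₃ = Σ R¹ ⊗ 1 ⊗ R²` in `H⊗³`. -/
noncomputable def ext13 : H ⊗[k] H →ₗ[k] H ⊗[k] (H ⊗[k] H) :=
  TensorProduct.map LinearMap.id (TensorProduct.mk k H H 1)

/-- `R₂₃ = Σ 1 ⊗ R¹ ⊗ R²` in `H⊗³`. -/
noncomputable def ext23 : H ⊗[k] H →ₗ[k] H ⊗[k] (H ⊗[k] H) :=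
  TensorProduct.mk k H (H ⊗[k] H) 1

/-- `Δ ⊗ id : H⊗² → H⊗³`. -/
noncomputable def comul12 : H ⊗[k] H →ₗ[k] H ⊗[k] (H ⊗[k] H) :=
  (TensorProduct.assoc k H H H).toLinearMap ∘ₗ
    TensorProduct.map Coalgebra.comul LinearMap.id

/-- `id ⊗ Δ : H⊗² → H⊗³`. -/
noncomputable def comul23 : H ⊗[k] H →ₗ[k] H ⊗[k] (H ⊗[k] H) :=
  TensorProduct.map LinearMap.id Coalgebra.comul

/-- The diagonal action `ρ(b) = Σ ρ₁(b⁽¹⁾)ρ₂(b⁽²⁾)` of `H` on `A` obtained from two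
commuting actions `ρ₁, ρ₂` via the comultiplication. -/
noncomputable def diagAct (ρ₁ ρ₂ : H →ₐ[k] Module.End k A) :
    H →ₗ[k] Module.End k A :=
  TensorProduct.lift
      ((LinearMap.mul k (Module.End k A)).compl₁₂ ρ₁.toLinearMap ρ₂.toLinearMap) ∘ₗ
    Coalgebra.comul

open TensorProduct

section TensorRep

variable {R K K' K'' M N P : Type*} [CommRing R] [Ring K] [Algebra R K] [Ring K'] [Algebra R K']
  [Ring K''] [Algebra R K''] [AddCommGroup M] [Module R M] [AddCommGroup N] [Module R N]
  [AddCommGroup P] [Module R P]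

noncomputable def tensorRep (π : K →ₐ[R] Module.End R M) (π' : K' →ₐ[R] Module.End R N) :
    K ⊗[R] K' →ₐ[R] Module.End R (M ⊗[R] N) :=
  Module.endTensorEndAlgHom.comp (Algebra.TensorProduct.map π π')

@[simp]
lemma tensorRep_tmul (π : K →ₐ[R] Module.End R M) (π' : K' →ₐ[R] Module.End R N)
    (x : K) (y : K') : tensorRep π π' (x ⊗ₜ y) = map (π x) (π' y) :=
  rfl

lemma tensorRep_tmul_one (π : K →ₐ[R] Module.End R M) (π' : K' →ₐ[R] Module.End R N)
    (x : K) : tensorRep π π' (x ⊗ₜ 1) = (π x).rTensor N := by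
  simp [LinearMap.rTensor, Module.End.one_eq_id]

lemma tensorRep_one_tmul (π : K →ₐ[R] Module.End R M) (π' : K' →ₐ[R] Module.End R N)
    (y : K') : tensorRep π π' (1 ⊗ₜ y) = (π' y).lTensor M := by
  simp [LinearMap.lTensor, Module.End.one_eq_id]

lemma tensorRep_comp_assoc_symm (π : K →ₐ[R] Module.End R M) (π' : K' →ₐ[R] Module.End R N)
    (π'' : K'' →ₐ[R] Module.End R P) (X : (K ⊗[R] K') ⊗[R] K'') :
    tensorRep (tensorRep π π') π'' X ∘ₗ (TensorProduct.assoc R M N P).symm.toLinearMap =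
      (TensorProduct.assoc R M N P).symm.toLinearMap ∘ₗ
        tensorRep π (tensorRep π' π'') (Algebra.TensorProduct.assoc R R R K K' K'' X) := by
  induction X using TensorProduct.induction_on with
  | zero => simp
  | add X Y hX hY => simp only [map_add, LinearMap.add_comp, LinearMap.comp_add, hX, hY]
  | tmul xy z =>
    induction xy using TensorProduct.induction_on with
    | zero => simp
    | add X Y hX hY =>
      simp only [add_tmul, map_add, LinearMap.add_comp, LinearMap.comp_add, hX, hY]
    | tmul x y => exact map_map_comp_assoc_symm_eq _ _ _

end TensorRep

section Twist

variable {R K M : Type*} [CommRing R] [Ring K] [Bialgebra R K] [AddCommGroup M] [Module R M]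
  (π : K →ₐ[R] Module.End R M) {m : M ⊗[R] M →ₗ[R] M}

/-- Drinfeld's twist (2-cocycle) condition `(Δ ⊗ id)(F) · F₁₂ = (id ⊗ Δ)(F) · F₂₃`. -/
def IsTwist (F : K ⊗[R] K) : Prop :=
  Algebra.TensorProduct.assoc R R R K K K (Coalgebra.comul.rTensor K F * (F ⊗ₜ 1)) =
    Coalgebra.comul.lTensor K F * (1 ⊗ₜ F)

lemma tensorRep_comp_rTensor (hm : ∀ g, π g ∘ₗ m = m ∘ₗ tensorRep π π (Coalgebra.comul g))
    (F : K ⊗[R] K) :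
    tensorRep π π F ∘ₗ m.rTensor M =
      m.rTensor M ∘ₗ tensorRep (tensorRep π π) π (Coalgebra.comul.rTensor K F) := by
  induction F using TensorProduct.induction_on with
  | zero => simp
  | add F G hF hG => simp only [map_add, LinearMap.add_comp, LinearMap.comp_add, hF, hG]
  | tmul x y =>
    rw [LinearMap.rTensor_tmul, tensorRep_tmul, tensorRep_tmul, LinearMap.rTensor, ← map_comp,
      ← map_comp, hm, LinearMap.id_comp, LinearMap.comp_id]

lemma tensorRep_comp_lTensor (hm : ∀ g, π g ∘ₗ m = m ∘ₗ tensorRep π π (Coalgebra.comul g))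
    (F : K ⊗[R] K) :
    tensorRep π π F ∘ₗ m.lTensor M =
      m.lTensor M ∘ₗ tensorRep π (tensorRep π π) (Coalgebra.comul.lTensor K F) := by
  induction F using TensorProduct.induction_on with
  | zero => simp
  | add F G hF hG => simp only [map_add, LinearMap.add_comp, LinearMap.comp_add, hF, hG]
  | tmul x y =>
    rw [LinearMap.lTensor_tmul, tensorRep_tmul, tensorRep_tmul, LinearMap.lTensor, ← map_comp,
      ← map_comp, hm, LinearMap.id_comp, LinearMap.comp_id]

lemma twisted_mul_equivariant (hm : ∀ g, π g ∘ₗ m = m ∘ₗ tensorRep π π (Coalgebra.comul g))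
    {F G : K ⊗[R] K} {g : K} (hg : Coalgebra.comul g * F = F * G) :
    π g ∘ₗ (m ∘ₗ tensorRep π π F) = (m ∘ₗ tensorRep π π F) ∘ₗ tensorRep π π G := by
  rw [← LinearMap.comp_assoc, hm, LinearMap.comp_assoc, LinearMap.comp_assoc,
    ← Module.End.mul_eq_comp, ← map_mul, hg, map_mul, Module.End.mul_eq_comp]

lemma twisted_mul_comp_rTensor (hm : ∀ g, π g ∘ₗ m = m ∘ₗ tensorRep π π (Coalgebra.comul g))
    (hassoc : m ∘ₗ m.rTensor M ∘ₗ (TensorProduct.assoc R M M M).symm.toLinearMap =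
      m ∘ₗ m.lTensor M)
    {F : K ⊗[R] K} (hF : IsTwist F) :
    (m ∘ₗ tensorRep π π F) ∘ₗ (m ∘ₗ tensorRep π π F).rTensor M ∘ₗ
        (TensorProduct.assoc R M M M).symm.toLinearMap =
      (m ∘ₗ tensorRep π π F) ∘ₗ (m ∘ₗ tensorRep π π F).lTensor M :=
  calc _
    _ = m ∘ₗ (tensorRep π π F ∘ₗ m.rTensor M) ∘ₗ (tensorRep π π F).rTensor M ∘ₗ
          (TensorProduct.assoc R M M M).symm.toLinearMap := by
      simp only [LinearMap.rTensor_comp, LinearMap.comp_assoc]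
    _ = m ∘ₗ m.rTensor M ∘ₗ
          tensorRep (tensorRep π π) π (Coalgebra.comul.rTensor K F * (F ⊗ₜ 1)) ∘ₗ
          (TensorProduct.assoc R M M M).symm.toLinearMap := by
      rw [tensorRep_comp_rTensor π hm, map_mul, tensorRep_tmul_one, Module.End.mul_eq_comp]
      simp only [LinearMap.comp_assoc]
    _ = (m ∘ₗ m.rTensor M ∘ₗ (TensorProduct.assoc R M M M).symm.toLinearMap) ∘ₗ
          tensorRep π (tensorRep π π)
            (Algebra.TensorProduct.assoc R R R K K K (Coalgebra.comul.rTensor K F * (F ⊗ₜ 1))) := by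
      rw [tensorRep_comp_assoc_symm]
      simp only [LinearMap.comp_assoc]
    _ = m ∘ₗ m.lTensor M ∘ₗ tensorRep π (tensorRep π π)
          (Coalgebra.comul.lTensor K F * (1 ⊗ₜ F)) := by
      rw [hassoc, hF, LinearMap.comp_assoc]
    _ = m ∘ₗ (tensorRep π π F ∘ₗ m.lTensor M) ∘ₗ (tensorRep π π F).lTensor M := by
      rw [tensorRep_comp_lTensor π hm, map_mul, tensorRep_one_tmul, Module.End.mul_eq_comp]
      simp only [LinearMap.comp_assoc]
    _ = _ := by
      simp only [LinearMap.lTensor_comp, LinearMap.comp_assoc]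

lemma twisted_mul_assoc (hm : ∀ g, π g ∘ₗ m = m ∘ₗ tensorRep π π (Coalgebra.comul g))
    (hassoc : ∀ x y z, m (m (x ⊗ₜ y) ⊗ₜ z) = m (x ⊗ₜ m (y ⊗ₜ z)))
    {F : K ⊗[R] K} (hF : IsTwist F) (x y z : M) :
    (m ∘ₗ tensorRep π π F) ((m ∘ₗ tensorRep π π F) (x ⊗ₜ y) ⊗ₜ z) =
      (m ∘ₗ tensorRep π π F) (x ⊗ₜ (m ∘ₗ tensorRep π π F) (y ⊗ₜ z)) := by
  have hassoc' : m ∘ₗ m.rTensor M ∘ₗ (TensorProduct.assoc R M M M).symm.toLinearMap =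
      m ∘ₗ m.lTensor M := by
    ext x y z
    exact hassoc x y z
  simpa using LinearMap.congr_fun (twisted_mul_comp_rTensor π hm hassoc' hF) (x ⊗ₜ (y ⊗ₜ z))

end Twist

section HopfIdentities

variable {k H}

/-- `a ⊗ b ↦ (1 ⊗ a) ⊗ (b ⊗ 1)`: under `(ρ₁ ⊗ ρ₂) ⊗ (ρ₁ ⊗ ρ₂)` this acts as `ρ₂ ⊗ ρ₁`. -/
noncomputable def crossIncl : H ⊗[k] H →ₐ[k] (H ⊗[k] H) ⊗[k] (H ⊗[k] H) :=
  Algebra.TensorProduct.map Algebra.TensorProduct.includeRight Algebra.TensorProduct.includeLeft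

/-- `a ⊗ (c ⊗ e) ↦ (a ⊗ f(c)¹) ⊗ (f(c)² ⊗ e)`. -/
noncomputable def splitMiddle (f : H →ₗ[k] H ⊗[k] H) :
    H ⊗[k] (H ⊗[k] H) →ₗ[k] (H ⊗[k] H) ⊗[k] (H ⊗[k] H) :=
  (TensorProduct.assoc k H H (H ⊗[k] H)).symm.toLinearMap ∘ₗ
    ((TensorProduct.assoc k H H H).toLinearMap ∘ₗ f.rTensor H).lTensor H

lemma splitMiddle_tmul (f : H →ₗ[k] H ⊗[k] H) (a c e : H) :
    splitMiddle f (a ⊗ₜ (c ⊗ₜ e)) =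
      (TensorProduct.assoc k H H (H ⊗[k] H)).symm (a ⊗ₜ TensorProduct.assoc k H H H (f c ⊗ₜ e)) :=
  rfl

lemma tensorTensorTensorComm_splitMiddle (f : H →ₗ[k] H ⊗[k] H) (y : H ⊗[k] (H ⊗[k] H)) :
    TensorProduct.tensorTensorTensorComm k H H H H (splitMiddle f y) =
      splitMiddle ((TensorProduct.comm k H H).toLinearMap ∘ₗ f) y := by
  suffices (TensorProduct.tensorTensorTensorComm k H H H H).toLinearMap ∘ₗ splitMiddle f =
      splitMiddle ((TensorProduct.comm k H H).toLinearMap ∘ₗ f) from LinearMap.congr_fun this y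
  ext a c e
  simp only [AlgebraTensorModule.curry_apply, curry_apply, LinearMap.coe_restrictScalars,
    LinearMap.comp_apply, LinearEquiv.coe_coe, splitMiddle_tmul]
  generalize f c = u
  induction u using TensorProduct.induction_on with
  | zero => simp
  | add u v hu hv => simp only [map_add, add_tmul, tmul_add, hu, hv]
  | tmul u v => simp

lemma splitMiddle_mul_crossIncl (f : H →ₗ[k] H ⊗[k] H) (R : H ⊗[k] H)
    (y : H ⊗[k] (H ⊗[k] H)) :
    splitMiddle f y * crossIncl R = splitMiddle (LinearMap.mulRight k R ∘ₗ f) y := by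
  suffices LinearMap.mulRight k (crossIncl R) ∘ₗ splitMiddle f =
      splitMiddle (LinearMap.mulRight k R ∘ₗ f) from LinearMap.congr_fun this y
  ext a c e
  simp only [AlgebraTensorModule.curry_apply, curry_apply, LinearMap.coe_restrictScalars,
    LinearMap.comp_apply, LinearMap.mulRight_apply, splitMiddle_tmul]
  generalize f c = u
  induction u using TensorProduct.induction_on with
  | zero => simp
  | add u v hu hv => simp only [map_add, add_tmul, tmul_add, add_mul, hu, hv]
  | tmul u v =>
    induction R using TensorProduct.induction_on with
    | zero => simp
    | add R R' hR hR' => simp only [map_add, add_tmul, tmul_add, mul_add, hR, hR']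
    | tmul r r' => simp [crossIncl]

lemma crossIncl_mul_splitMiddle (f : H →ₗ[k] H ⊗[k] H) (R : H ⊗[k] H)
    (y : H ⊗[k] (H ⊗[k] H)) :
    crossIncl R * splitMiddle f y = splitMiddle (LinearMap.mulLeft k R ∘ₗ f) y := by
  suffices LinearMap.mulLeft k (crossIncl R) ∘ₗ splitMiddle f =
      splitMiddle (LinearMap.mulLeft k R ∘ₗ f) from LinearMap.congr_fun this y
  ext a c e
  simp only [AlgebraTensorModule.curry_apply, curry_apply, LinearMap.coe_restrictScalars,
    LinearMap.comp_apply, LinearMap.mulLeft_apply, splitMiddle_tmul]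
  generalize f c = u
  induction u using TensorProduct.induction_on with
  | zero => simp
  | add u v hu hv => simp only [map_add, add_tmul, tmul_add, mul_add, hu, hv]
  | tmul u v =>
    induction R using TensorProduct.induction_on with
    | zero => simp
    | add R R' hR hR' => simp only [map_add, add_tmul, tmul_add, add_mul, hR, hR']
    | tmul r r' => simp [crossIncl]

lemma map_comul_comul_comul (b : H) :
    TensorProduct.map Coalgebra.comul Coalgebra.comul (Coalgebra.comul b) =
      splitMiddle (Coalgebra.comul (R := k)) (Coalgebra.comul.lTensor H (Coalgebra.comul b)) := by
  suffices TensorProduct.map Coalgebra.comul Coalgebra.comul ∘ₗ Coalgebra.comul =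
      splitMiddle (Coalgebra.comul (R := k) (A := H)) ∘ₗ Coalgebra.comul.lTensor H ∘ₗ
        Coalgebra.comul from LinearMap.congr_fun this b
  simp only [splitMiddle, coassoc_simps]

lemma comul_comul_mul_crossIncl (R Rinv : H ⊗[k] H) (hR' : Rinv * R = 1)
    (hRΔ : ∀ b : H,
      (TensorProduct.comm k H H) (Coalgebra.comul (R := k) b) =
        R * Coalgebra.comul b * Rinv) (b : H) :
    Coalgebra.comul (R := k) (Coalgebra.comul (R := k) b) * crossIncl R =
      crossIncl R * TensorProduct.map Coalgebra.comul Coalgebra.comul (Coalgebra.comul b) := by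
  have hΔop : LinearMap.mulRight k R ∘ₗ (TensorProduct.comm k H H).toLinearMap ∘ₗ
      Coalgebra.comul = LinearMap.mulLeft k R ∘ₗ Coalgebra.comul (R := k) (A := H) := by
    ext c
    simp [hRΔ, mul_assoc, hR']
  calc _
    -- the comultiplication of `H ⊗ H` is `Δ ⊗ Δ` followed by swapping the middle factors
    _ = TensorProduct.tensorTensorTensorComm k H H H H
          (TensorProduct.map Coalgebra.comul Coalgebra.comul (Coalgebra.comul b)) *
          crossIncl R := rfl
    _ = splitMiddle (LinearMap.mulRight k R ∘ₗ (TensorProduct.comm k H H).toLinearMap ∘ₗ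
          Coalgebra.comul) (Coalgebra.comul.lTensor H (Coalgebra.comul b)) := by
      rw [map_comul_comul_comul, tensorTensorTensorComm_splitMiddle, splitMiddle_mul_crossIncl]
    _ = _ := by
      rw [hΔop, ← crossIncl_mul_splitMiddle, map_comul_comul_comul]

lemma comul_one_tmul (a : H) :
    Coalgebra.comul (R := k) ((1 : H) ⊗ₜ[k] a) =
      Algebra.TensorProduct.map (Algebra.TensorProduct.includeRight (A := H))
        Algebra.TensorProduct.includeRight (Coalgebra.comul a) := by
  rw [TensorProduct.comul_tmul, Bialgebra.comul_one, Algebra.TensorProduct.one_def,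
    AlgebraTensorModule.tensorTensorTensorComm_eq]
  induction Coalgebra.comul (R := k) a using TensorProduct.induction_on with
  | zero => simp
  | add u v hu hv => simp only [tmul_add, map_add, hu, hv]
  | tmul u v => simp

lemma comul_tmul_one (a : H) :
    Coalgebra.comul (R := k) (a ⊗ₜ[k] (1 : H)) =
      Algebra.TensorProduct.map
        (Algebra.TensorProduct.includeLeft (R := k) (S := k) (A := H) (B := H))
        Algebra.TensorProduct.includeLeft (Coalgebra.comul a) := by
  rw [TensorProduct.comul_tmul, Bialgebra.comul_one, Algebra.TensorProduct.one_def,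
    AlgebraTensorModule.tensorTensorTensorComm_eq]
  induction Coalgebra.comul (R := k) a using TensorProduct.induction_on with
  | zero => simp
  | add u v hu hv => simp only [add_tmul, map_add, hu, hv]
  | tmul u v => simp

lemma assoc_rTensor_comul_crossIncl (G : H ⊗[k] H) :
    Algebra.TensorProduct.assoc k k k _ _ _
        (Coalgebra.comul.rTensor (H ⊗[k] H) (crossIncl G)) =
      Algebra.TensorProduct.map Algebra.TensorProduct.includeRight crossIncl (comul12 k H G) := by
  induction G using TensorProduct.induction_on with
  | zero => simp
  | add G G' hG hG' => simp only [map_add, hG, hG']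
  | tmul x y =>
    simp only [crossIncl, comul12, Algebra.TensorProduct.map_tmul, LinearMap.rTensor_tmul,
      comul_one_tmul, LinearMap.comp_apply, map_tmul, LinearMap.id_apply, LinearEquiv.coe_coe,
      Algebra.TensorProduct.includeRight_apply, Algebra.TensorProduct.includeLeft_apply]
    induction Coalgebra.comul (R := k) x using TensorProduct.induction_on with
    | zero => simp
    | add u v hu hv => simp only [map_add, add_tmul, hu, hv]
    | tmul u v => simp

lemma lTensor_comul_crossIncl (G : H ⊗[k] H) :
    Coalgebra.comul.lTensor (H ⊗[k] H) (crossIncl G) =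
      Algebra.TensorProduct.map Algebra.TensorProduct.includeRight
        (Algebra.TensorProduct.map Algebra.TensorProduct.includeLeft
          Algebra.TensorProduct.includeLeft) (comul23 k H G) := by
  induction G using TensorProduct.induction_on with
  | zero => simp
  | add G G' hG hG' => simp only [map_add, hG, hG']
  | tmul x y =>
    simp only [crossIncl, comul23, Algebra.TensorProduct.map_tmul, LinearMap.lTensor_tmul,
      comul_tmul_one, map_tmul, LinearMap.id_apply,
      Algebra.TensorProduct.includeRight_apply, Algebra.TensorProduct.includeLeft_apply]

lemma commute_one_tmul_crossIncl (G G' : H ⊗[k] H) :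
    Commute ((1 : H ⊗[k] H) ⊗ₜ[k] crossIncl G)
      (Algebra.TensorProduct.assoc k k k (H ⊗[k] H) (H ⊗[k] H) (H ⊗[k] H) (crossIncl G' ⊗ₜ 1)) := by
  suffices (LinearMap.mul k _).compl₁₂
      (TensorProduct.mk k (H ⊗[k] H) _ 1 ∘ₗ crossIncl.toLinearMap)
      ((Algebra.TensorProduct.assoc k k k (H ⊗[k] H) (H ⊗[k] H) (H ⊗[k] H)).toLinearMap ∘ₗ
        (TensorProduct.mk k _ (H ⊗[k] H)).flip 1 ∘ₗ crossIncl.toLinearMap) =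
      (LinearMap.mul k _).flip.compl₁₂
      (TensorProduct.mk k (H ⊗[k] H) _ 1 ∘ₗ crossIncl.toLinearMap)
      ((Algebra.TensorProduct.assoc k k k (H ⊗[k] H) (H ⊗[k] H) (H ⊗[k] H)).toLinearMap ∘ₗ
        (TensorProduct.mk k _ (H ⊗[k] H)).flip 1 ∘ₗ crossIncl.toLinearMap) from
    LinearMap.congr_fun₂ this G G'
  ext x y x' y'
  simp [crossIncl, Algebra.TensorProduct.one_def]

lemma isTwist_crossIncl (R : H ⊗[k] H)
    (hR13_23 : comul12 k H R = ext13 k H R * ext23 k H R)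
    (hR13_12 : comul23 k H R = ext13 k H R * ext12 k H R) :
    IsTwist (crossIncl R) := by
  -- `j₁ (x ⊗ y ⊗ z) = (1 ⊗ x) ⊗ (1 ⊗ y) ⊗ (z ⊗ 1)`, `j₂ (x ⊗ y ⊗ z) = (1 ⊗ x) ⊗ (y ⊗ 1) ⊗ (z ⊗ 1)`
  let j₁ : H ⊗[k] (H ⊗[k] H) →ₐ[k] (H ⊗[k] H) ⊗[k] ((H ⊗[k] H) ⊗[k] (H ⊗[k] H)) :=
    Algebra.TensorProduct.map Algebra.TensorProduct.includeRight crossIncl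
  let j₂ : H ⊗[k] (H ⊗[k] H) →ₐ[k] (H ⊗[k] H) ⊗[k] ((H ⊗[k] H) ⊗[k] (H ⊗[k] H)) :=
    Algebra.TensorProduct.map Algebra.TensorProduct.includeRight
      (Algebra.TensorProduct.map Algebra.TensorProduct.includeLeft
        Algebra.TensorProduct.includeLeft)
  have h13 : ∀ G, j₁ (ext13 k H G) = j₂ (ext13 k H G) := by
    intro G
    induction G using TensorProduct.induction_on with
    | zero => simp
    | add G G' hG hG' => simp only [map_add, hG, hG']
    | tmul x y => simp [j₁, j₂, ext13, crossIncl]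
  have h23 : j₁ (ext23 k H R) = 1 ⊗ₜ crossIncl R := by
    simp [j₁, ext23, Algebra.TensorProduct.one_def]
  have h12 : ∀ G, j₂ (ext12 k H G) =
      Algebra.TensorProduct.assoc k k k _ _ _ (crossIncl G ⊗ₜ 1) := by
    intro G
    induction G using TensorProduct.induction_on with
    | zero => simp
    | add G G' hG hG' => simp only [map_add, add_tmul, hG, hG']
    | tmul x y => simp [j₂, ext12, crossIncl, Algebra.TensorProduct.one_def]
  calc _
    _ = j₁ (ext13 k H R) * (1 ⊗ₜ crossIncl R) *
          Algebra.TensorProduct.assoc k k k _ _ _ (crossIncl R ⊗ₜ 1) := by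
      rw [map_mul, assoc_rTensor_comul_crossIncl, hR13_23, map_mul, h23]
    _ = j₂ (ext13 k H R) * Algebra.TensorProduct.assoc k k k _ _ _ (crossIncl R ⊗ₜ 1) *
          (1 ⊗ₜ crossIncl R) := by
      rw [h13, mul_assoc (j₂ _), (commute_one_tmul_crossIncl R R).eq, ← mul_assoc (j₂ _)]
    _ = _ := by
      rw [← h12, ← map_mul, ← hR13_12, lTensor_comul_crossIncl]

end HopfIdentities

section CommutingActions

variable {k H A}
  {ρ₁ ρ₂ : H →ₐ[k] Module.End k A} (hcomm : ∀ b b' : H, Commute (ρ₁ b) (ρ₂ b'))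

lemma act2_eq_tensorRep (ρ ρ' : H →ₐ[k] Module.End k A) (G : H ⊗[k] H) :
    act2 k H A ρ ρ' G = tensorRep ρ ρ' G := by
  induction G using TensorProduct.induction_on with
  | zero => simp
  | add G G' hG hG' => simp only [map_add, hG, hG']
  | tmul a b => simp [act2]

lemma tensorRep_lift_crossIncl (R : H ⊗[k] H) :
    tensorRep (Algebra.TensorProduct.lift ρ₁ ρ₂ hcomm) (Algebra.TensorProduct.lift ρ₁ ρ₂ hcomm)
      (crossIncl R) = act2 k H A ρ₂ ρ₁ R := by
  induction R using TensorProduct.induction_on with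
  | zero => simp
  | add G G' hG hG' => simp only [map_add, hG, hG']
  | tmul a b => simp [crossIncl, act2]

lemma tensorRep_lift_comul_tmul (b b' : H) :
    tensorRep (Algebra.TensorProduct.lift ρ₁ ρ₂ hcomm) (Algebra.TensorProduct.lift ρ₁ ρ₂ hcomm)
      (Coalgebra.comul (b ⊗ₜ[k] b')) =
      tensorRep ρ₁ ρ₁ (Coalgebra.comul b) * tensorRep ρ₂ ρ₂ (Coalgebra.comul b') := by
  rw [TensorProduct.comul_tmul]
  generalize Coalgebra.comul (R := k) b = u
  generalize Coalgebra.comul (R := k) b' = v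
  induction u using TensorProduct.induction_on with
  | zero => simp
  | add u u' hu hu' => simp only [add_tmul, map_add, hu, hu', add_mul]
  | tmul a c =>
    induction v using TensorProduct.induction_on with
    | zero => simp
    | add v v' hv hv' => simp only [tmul_add, map_add, hv, hv', mul_add]
    | tmul a' c' => simp [TensorProduct.map_mul]

lemma lift_comp_eq_comp_tensorRep_comul (μ : A →ₗ[k] A →ₗ[k] A)
    (hinv : ∀ b b' : H,
      (ρ₁ b * ρ₂ b') ∘ₗ TensorProduct.lift μ =
        TensorProduct.lift μ ∘ₗ
          (act2 k H A ρ₁ ρ₁ (Coalgebra.comul b) ∘ₗ act2 k H A ρ₂ ρ₂ (Coalgebra.comul b')))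
    (g : H ⊗[k] H) :
    Algebra.TensorProduct.lift ρ₁ ρ₂ hcomm g ∘ₗ TensorProduct.lift μ =
      TensorProduct.lift μ ∘ₗ
        tensorRep (Algebra.TensorProduct.lift ρ₁ ρ₂ hcomm) (Algebra.TensorProduct.lift ρ₁ ρ₂ hcomm)
          (Coalgebra.comul g) := by
  induction g using TensorProduct.induction_on with
  | zero => simp
  | add g g' hg hg' => simp only [map_add, LinearMap.add_comp, LinearMap.comp_add, hg, hg']
  | tmul b b' =>
    rw [Algebra.TensorProduct.lift_tmul, hinv, tensorRep_lift_comul_tmul, act2_eq_tensorRep,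
      act2_eq_tensorRep, Module.End.mul_eq_comp]

lemma tensorRep_lift_map_comul (X : H ⊗[k] H) :
    tensorRep (Algebra.TensorProduct.lift ρ₁ ρ₂ hcomm) (Algebra.TensorProduct.lift ρ₁ ρ₂ hcomm)
      (TensorProduct.map Coalgebra.comul Coalgebra.comul X) =
      TensorProduct.homTensorHomMap (RingHom.id k) A A A A
        (TensorProduct.map (diagAct k H A ρ₁ ρ₂) (diagAct k H A ρ₁ ρ₂) X) := by
  have h : diagAct k H A ρ₁ ρ₂ =
      (Algebra.TensorProduct.lift ρ₁ ρ₂ hcomm).toLinearMap ∘ₗ Coalgebra.comul :=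
    rfl
  induction X using TensorProduct.induction_on with
  | zero => simp
  | add G G' hG hG' => simp only [map_add, hG, hG']
  | tmul a b => simp [h]

end CommutingActions

theorem twist_by_R_matrix_of_two_commuting_actions
    (R Rinv : H ⊗[k] H) (hR' : Rinv * R = 1)
    (hRΔ : ∀ b : H,
      (TensorProduct.comm k H H) (Coalgebra.comul (R := k) b) =
        R * Coalgebra.comul b * Rinv)
    (hR13_23 : comul12 k H R = ext13 k H R * ext23 k H R)
    (hR13_12 : comul23 k H R = ext13 k H R * ext12 k H R)
    (ρ₁ ρ₂ : H →ₐ[k] Module.End k A)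
    (hcomm : ∀ b b' : H, Commute (ρ₁ b) (ρ₂ b'))
    (μ : A →ₗ[k] A →ₗ[k] A)
    (hassoc : ∀ x y z : A, μ (μ x y) z = μ x (μ y z))
    (hinv : ∀ b b' : H,
      (ρ₁ b * ρ₂ b') ∘ₗ TensorProduct.lift μ =
        TensorProduct.lift μ ∘ₗ
          (act2 k H A ρ₁ ρ₁ (Coalgebra.comul b) ∘ₗ act2 k H A ρ₂ ρ₂ (Coalgebra.comul b'))) :
    (∀ x y z : A,
      (fun a b => TensorProduct.lift μ (act2 k H A ρ₂ ρ₁ R (a ⊗ₜ[k] b)))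
          ((fun a b => TensorProduct.lift μ (act2 k H A ρ₂ ρ₁ R (a ⊗ₜ[k] b))) x y) z =
      (fun a b => TensorProduct.lift μ (act2 k H A ρ₂ ρ₁ R (a ⊗ₜ[k] b))) x
          ((fun a b => TensorProduct.lift μ (act2 k H A ρ₂ ρ₁ R (a ⊗ₜ[k] b))) y z)) ∧
    (∀ b : H,
      diagAct k H A ρ₁ ρ₂ b ∘ₗ (TensorProduct.lift μ ∘ₗ act2 k H A ρ₂ ρ₁ R) =
        (TensorProduct.lift μ ∘ₗ act2 k H A ρ₂ ρ₁ R) ∘ₗ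
          TensorProduct.homTensorHomMap (RingHom.id k) A A A A
            (TensorProduct.map (diagAct k H A ρ₁ ρ₂) (diagAct k H A ρ₁ ρ₂)
              (Coalgebra.comul b))) := by
  have hm := lift_comp_eq_comp_tensorRep_comul hcomm μ hinv
  have hT : act2 k H A ρ₂ ρ₁ R = tensorRep (Algebra.TensorProduct.lift ρ₁ ρ₂ hcomm)
      (Algebra.TensorProduct.lift ρ₁ ρ₂ hcomm) (crossIncl R) :=
    (tensorRep_lift_crossIncl hcomm R).symm
  refine ⟨fun x y z => ?_, fun b => ?_⟩
  · simp only [hT]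
    exact twisted_mul_assoc _ hm (fun x y z => by simpa using hassoc x y z)
      (isTwist_crossIncl R hR13_23 hR13_12) x y z
  · rw [hT, ← tensorRep_lift_map_comul hcomm]
    exact twisted_mul_equivariant _ hm (comul_comul_mul_crossIncl R Rinv hR' hRΔ b)

end Stmt7
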